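/- Let W ⊂ ℝ^I be compact and J a positive integer. Define the sum-of-power-sums map S : W^J → ℝ^{κ(I,J)} by S(a₁,…,a_J) = ∑_{j=1}^J η_{I,J}(a_j), where η_{I,J} collects monomials of total degree 1 through J. Then S is constant on orbits of the symmetric group S_J acting by permuting the J arguments, and the induced map on the quotient W^J / S_J is injective; moreover, since S is continuous and W^J / S_J is compact Hausdorff, the induced map is a homeomorphism onto its image, so its inverse Λ is continuous. -/

import Mathlib

/-!
Power sums of degree `≤ n` of `n` scalars determine their elementary symmetric functions
(Newton's identities), hence the polynomial `∏ (X - uⱼ)` and so the multiset of the `uⱼ`.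
For points in `Kᴵ`, pick a linear form `t ⬝ᵥ ·` injective on the finitely many points
involved; by the multinomial theorem, the power sums of the scalars `t ⬝ᵥ aⱼ` are
combinations of the multisymmetric power sums, so the multisets of points agree.
On the compact quotient `Wᴶ / Sᴶ` the induced continuous injection into a Hausdorff space is
then a closed embedding.
-/

open Finset

/-- Tuples of J points in W, up to permutation: the setoid whose quotient is
W^J / S_J. -/
def permSetoid (I J : ℕ) (W : Set (Fin I → ℝ)) :
    Setoid {a : Fin J → (Fin I → ℝ) // ∀ j, a j ∈ W} where
  r a b := ∃ σ : Equiv.Perm (Fin J), (b : Fin J → (Fin I → ℝ)) = ↑a ∘ σ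
  iseqv := by
    constructor
    · intro a; exact ⟨Equiv.refl _, rfl⟩
    · rintro a b ⟨σ, h⟩
      exact ⟨σ.symm, by funext j; simp [h, Function.comp]⟩
    · rintro a b c ⟨σ, h⟩ ⟨τ, h'⟩
      exact ⟨τ.trans σ, by funext j; simp [h', h, Function.comp]⟩

/-- Index set of monomials of total degree 1..J in I variables;
cardinality κ(I,J) = binom(J+I,I) - 1. -/
def MIdx (I J : ℕ) := {s : Fin I → ℕ // 1 ≤ ∑ i, s i ∧ ∑ i, s i ≤ J}

/-- The multisymmetric power sum map η_{I,J}. -/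
noncomputable def eta (I J : ℕ) (x : Fin I → ℝ) : MIdx I J → ℝ :=
  fun s => ∏ i, x i ^ s.val i

namespace Multiset

variable {R : Type*} [CommRing R] [IsDomain R]

theorem eq_of_card_eq_of_esymm_eq {M N : Multiset R} (hc : card M = card N)
    (h : ∀ k, M.esymm k = N.esymm k) : M = N := by
  have hprod : (M.map fun r => Polynomial.X - Polynomial.C r).prod
      = (N.map fun r => Polynomial.X - Polynomial.C r).prod := by
    ext n
    rcases le_or_gt n (card M) with hn | hn
    · rw [prod_X_sub_C_coeff M hn, prod_X_sub_C_coeff N (hc ▸ hn), hc, h]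
    · rw [Polynomial.coeff_eq_zero_of_natDegree_lt, Polynomial.coeff_eq_zero_of_natDegree_lt] <;>
        rw [Polynomial.natDegree_multiset_prod_X_sub_C_eq_card] <;> omega
  simpa only [Polynomial.roots_multiset_prod_X_sub_C] using congrArg Polynomial.roots hprod

variable [CharZero R] {ι : Type*} [Fintype ι]

theorem esymm_map_univ_eq_of_sum_pow_eq {u v : ι → R}
    (h : ∀ k, 1 ≤ k → k ≤ Fintype.card ι → ∑ j, u j ^ k = ∑ j, v j ^ k) (k : ℕ) :
    (univ.val.map u).esymm k = (univ.val.map v).esymm k := by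
  induction k using Nat.strong_induction_on with
  | _ k ih =>
  rcases Nat.eq_zero_or_pos k with rfl | hk
  · simp only [esymm, powersetCard_zero_left]
  rcases le_or_gt k (Fintype.card ι) with hkn | hkn
  · have newton (w : ι → R) := congrArg (MvPolynomial.aeval w) (MvPolynomial.mul_esymm_eq_sum ι R k)
    simp only [map_mul, map_sum, map_pow, map_natCast, map_neg, map_one,
      MvPolynomial.aeval_esymm_eq_multiset_esymm, MvPolynomial.psum, MvPolynomial.aeval_X]
      at newton
    apply mul_left_cancel₀ (Nat.cast_ne_zero.mpr hk.ne' : (k : R) ≠ 0)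
    rw [newton u, newton v]
    congr 1
    refine sum_congr rfl fun p hp => ?_
    obtain ⟨hsum, hlt⟩ : p.1 + p.2 = k ∧ p.1 < k := by simpa using hp
    rw [ih p.1 hlt, h p.2 (by omega) (by omega)]
  · rw [esymm, esymm, powersetCard_eq_empty _ (by simpa using hkn),
      powersetCard_eq_empty _ (by simpa using hkn)]

theorem map_univ_eq_of_sum_pow_eq {u v : ι → R}
    (h : ∀ k, 1 ≤ k → k ≤ Fintype.card ι → ∑ j, u j ^ k = ∑ j, v j ^ k) :
    univ.val.map u = univ.val.map v :=
  eq_of_card_eq_of_esymm_eq (by simp) (esymm_map_univ_eq_of_sum_pow_eq h)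

end Multiset

theorem exists_perm_eq_comp_of_map_univ_eq {ι α : Type*} [Fintype ι] [DecidableEq α]
    {a b : ι → α} (h : univ.val.map a = univ.val.map b) :
    ∃ τ : Equiv.Perm ι, b = a ∘ τ := by
  have hfiber (x : α) : Fintype.card {i // b i = x} = Fintype.card {i // a i = x} := by
    have := congrArg (Multiset.count x) h
    simp only [Multiset.count_map] at this
    simp only [Fintype.card_subtype, eq_comm (b := x)]
    exact this.symm
  exact ⟨Equiv.ofFiberEquiv fun x => Fintype.equivOfCardEq (hfiber x),
    funext fun i => (Equiv.ofFiberEquiv_map _ i).symm⟩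

theorem exists_injOn_dotProduct {K σ : Type*} [Field K] [Infinite K] [Fintype σ]
    {S : Set (σ → K)} (hS : S.Finite) : ∃ t : σ → K, S.InjOn (t ⬝ᵥ ·) := by
  classical
  have : Finite {p : S × S // p.1 ≠ p.2} := by
    have := hS.to_subtype
    infer_instance
  obtain ⟨f, hf⟩ := Module.exists_dual_forall_apply_ne_zero (K := K)
    (fun p : {p : S × S // p.1 ≠ p.2} => (p.1.1 : σ → K) - p.1.2)
    (fun p => sub_ne_zero.mpr (Subtype.coe_injective.ne p.2))
  set t : σ → K := fun i => f (Pi.single i 1)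
  have hf_eq (z : σ → K) : f z = t ⬝ᵥ z := by
    rw [LinearMap.pi_apply_eq_sum_univ f z, dotProduct]
    refine sum_congr rfl fun i _ => ?_
    rw [smul_eq_mul, mul_comm]
    congr
    ext j
    simp [Pi.single_apply, eq_comm]
  refine ⟨t, fun x hx y hy hxy => by_contra fun hne => ?_⟩
  refine hf ⟨(⟨x, hx⟩, ⟨y, hy⟩), fun h => hne (congrArg Subtype.val h)⟩ ?_
  rw [map_sub, sub_eq_zero, hf_eq, hf_eq]
  exact hxy

theorem sum_dotProduct_pow_eq_of_sum_prod_pow_eq {R ι σ : Type*} [CommSemiring R]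
    [Fintype ι] [Fintype σ] {a b : ι → σ → R} {k : ℕ}
    (h : ∀ s : σ → ℕ, ∑ i, s i = k → ∑ j, ∏ i, a j i ^ s i = ∑ j, ∏ i, b j i ^ s i)
    (t : σ → R) :
    ∑ j, (t ⬝ᵥ a j) ^ k = ∑ j, (t ⬝ᵥ b j) ^ k := by
  classical
  have multinomial (x : σ → R) : (t ⬝ᵥ x) ^ k
      = ∑ s ∈ piAntidiag univ k, (Nat.multinomial univ s * ∏ i, t i ^ s i) * ∏ i, x i ^ s i := by
    rw [dotProduct, sum_pow_eq_sum_piAntidiag]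
    refine sum_congr rfl fun s _ => ?_
    simp_rw [mul_assoc, ← prod_mul_distrib, mul_pow]
  simp_rw [multinomial]
  rw [sum_comm, sum_comm (s := univ)]
  refine sum_congr rfl fun s hs => ?_
  simp_rw [← mul_sum]
  rw [h s (mem_piAntidiag.mp hs).1]

theorem exists_perm_eq_comp_of_sum_prod_pow_eq {K ι σ : Type*} [Field K] [CharZero K]
    [Fintype ι] [Fintype σ] {a b : ι → σ → K}
    (h : ∀ s : σ → ℕ, 1 ≤ ∑ i, s i → ∑ i, s i ≤ Fintype.card ι →
      ∑ j, ∏ i, a j i ^ s i = ∑ j, ∏ i, b j i ^ s i) :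
    ∃ τ : Equiv.Perm ι, b = a ∘ τ := by
  classical
  obtain ⟨t, ht⟩ := exists_injOn_dotProduct ((Set.finite_range a).union (Set.finite_range b))
  have hscalar : univ.val.map (t ⬝ᵥ a ·) = univ.val.map (t ⬝ᵥ b ·) :=
    Multiset.map_univ_eq_of_sum_pow_eq fun k hk hkn =>
      sum_dotProduct_pow_eq_of_sum_prod_pow_eq (fun s hs => h s (hs ▸ hk) (hs ▸ hkn)) t
  obtain ⟨τ, hτ⟩ := exists_perm_eq_comp_of_map_univ_eq hscalar
  exact ⟨τ, funext fun j => ht (.inr ⟨j, rfl⟩) (.inl ⟨τ j, rfl⟩) (congrFun hτ j)⟩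

theorem continuous_eta (I J : ℕ) : Continuous (eta I J) :=
  continuous_pi fun _ => continuous_finsetProd _ fun i _ => (continuous_apply i).pow _

theorem sum_eta_apply {I J : ℕ} {ι : Type*} [Fintype ι] (a : ι → Fin I → ℝ) (s : MIdx I J) :
    (∑ j, eta I J (a j)) s = ∑ j, ∏ i, a j i ^ s.val i :=
  Finset.sum_apply _ _ _

theorem stmt_12_general (I J : ℕ)
    (W : Set (Fin I → ℝ)) (hWc : IsCompact W) :
    -- S is constant on orbits of the symmetric group
    (∀ a : Fin J → (Fin I → ℝ), ∀ σ : Equiv.Perm (Fin J),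
      ∑ j, eta I J ((a ∘ σ) j) = ∑ j, eta I J (a j)) ∧
    -- the induced map on W^J / S_J is an embedding (continuous, injective,
    -- with continuous inverse onto its image)
    ∃ Sq : Quotient (permSetoid I J W) → (MIdx I J → ℝ),
      (∀ a : {a : Fin J → (Fin I → ℝ) // ∀ j, a j ∈ W},
        Sq (Quotient.mk (permSetoid I J W) a) = ∑ j, eta I J (a.val j)) ∧
      Topology.IsEmbedding Sq := by
  have hinv (a : Fin J → Fin I → ℝ) (σ : Equiv.Perm (Fin J)) :
      ∑ j, eta I J ((a ∘ σ) j) = ∑ j, eta I J (a j) :=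
    Equiv.sum_comp σ fun j => eta I J (a j)
  let S (a : {a : Fin J → Fin I → ℝ // ∀ j, a j ∈ W}) : MIdx I J → ℝ := ∑ j, eta I J (a.val j)
  have hS : ∀ a b, permSetoid I J W a b → S a = S b := by
    rintro a b ⟨σ, hσ⟩
    simp only [S, hσ, hinv]
  refine ⟨hinv, Quotient.lift S hS, fun _ => rfl, ?_⟩
  have : CompactSpace {a : Fin J → Fin I → ℝ // ∀ j, a j ∈ W} :=
    (isCompact_iff_compactSpace (s := {a : Fin J → Fin I → ℝ | ∀ j, a j ∈ W})).mp
      (by simpa [Set.pi] using isCompact_univ_pi fun _ : Fin J => hWc)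
  have hcont : Continuous (Quotient.lift S hS) :=
    (continuous_finsetSum _ fun j _ =>
      (continuous_eta I J).comp ((continuous_apply j).comp continuous_subtype_val)).quotient_lift hS
  have hinj : Function.Injective (Quotient.lift S hS) := by
    refine Quotient.ind₂ fun a b hab => Quotient.sound ?_
    refine exists_perm_eq_comp_of_sum_prod_pow_eq fun s hs1 hs2 => ?_
    exact (sum_eta_apply _ _).symm.trans
      ((congrFun hab ⟨s, hs1, by simpa using hs2⟩).trans (sum_eta_apply _ _))
  exact (hcont.isClosedEmbedding hinj).isEmbedding

/-- the sum-of-power-sums map S is S_J-invariant, continuous,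
and induces a topological embedding (a homeomorphism onto its image) of the
quotient W^J / S_J, so the inverse Λ is continuous. -/
theorem stmt_12 (I J : ℕ) (hJ : 0 < J)
    (W : Set (Fin I → ℝ)) (hWc : IsCompact W) :
    -- S is constant on orbits of the symmetric group
    (∀ a : Fin J → (Fin I → ℝ), ∀ σ : Equiv.Perm (Fin J),
      ∑ j, eta I J ((a ∘ σ) j) = ∑ j, eta I J (a j)) ∧
    -- the induced map on W^J / S_J is an embedding (continuous, injective,
    -- with continuous inverse onto its image)
    ∃ Sq : Quotient (permSetoid I J W) → (MIdx I J → ℝ),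
      (∀ a : {a : Fin J → (Fin I → ℝ) // ∀ j, a j ∈ W},
        Sq (Quotient.mk (permSetoid I J W) a) = ∑ j, eta I J (a.val j)) ∧
      Topology.IsEmbedding Sq :=
  stmt_12_general I J W hWc
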